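/- arXiv:2603.11812 — 5 statements merged into one kernel-verified Lean document; each statement's English description precedes it below -/
import Mathlib

section
/- Let V be a d×d unitary matrix over ℂ such that for every unit vector ψ, |⟨ψ, VᵀV ψ⟩| = 1. Then there exists η ∈ ℝ such that VᵀV = e^{iη}·I, and consequently e^{-iη/2}V is a real orthogonal matrix up to the condition (e^{-iη/2}V)ᵀ(e^{-iη/2}V) = I. -/
open Matrix Complex

private lemma aux_eq_one_of_re {z : ℂ} (hz : ‖z‖ = 1) (hre : z.re = 1) : z = 1 := by
  have hn : Complex.normSq z = 1 := by
    rw [← Complex.sq_norm, hz]; norm_num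
  have him : z.im = 0 := by
    have h2 : z.re * z.re + z.im * z.im = 1 := hn
    nlinarith [sq_nonneg z.im]
  exact Complex.ext (by simpa using hre) (by simpa using him)

private lemma aux_eq_of_abs {a b : ℂ} (ha : ‖a‖ = 1) (hb : ‖b‖ = 1)
    (hab : ‖a + b‖ = 2) : a = b := by
  have hna : Complex.normSq a = 1 := by rw [← Complex.sq_norm, ha]; norm_num
  have hnb : Complex.normSq b = 1 := by rw [← Complex.sq_norm, hb]; norm_num
  have hnab : Complex.normSq (a + b) = 4 := by rw [← Complex.sq_norm, hab]; norm_num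
  have hre : (a * (starRingEnd ℂ) b).re = 1 := by
    have h3 := Complex.normSq_add a b
    rw [hnab, hna, hnb] at h3
    linarith
  have habs : ‖a * (starRingEnd ℂ) b‖ = 1 := by
    rw [norm_mul, Complex.norm_conj, ha, hb]; norm_num
  have h1 : a * (starRingEnd ℂ) b = 1 := aux_eq_one_of_re habs hre
  have hbb : (starRingEnd ℂ) b * b = 1 := by
    rw [← Complex.normSq_eq_conj_mul_self, hnb]; norm_num
  calc a = a * ((starRingEnd ℂ) b * b) := by rw [hbb, mul_one]
    _ = (a * (starRingEnd ℂ) b) * b := by ring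
    _ = b := by rw [h1, one_mul]

theorem transpose_mul_self_phase_identity {d : ℕ}
    (V : Matrix (Fin d) (Fin d) ℂ) (hV : Vᴴ * V = 1)
    (h : ∀ ψ : Fin d → ℂ, star ψ ⬝ᵥ ψ = 1 →
      ‖star ψ ⬝ᵥ (Vᵀ * V) *ᵥ ψ‖ = 1) :
    ∃ η : ℝ, Vᵀ * V = Complex.exp (η * Complex.I) • (1 : Matrix (Fin d) (Fin d) ℂ) ∧
      (Complex.exp (-(η / 2) * Complex.I) • V)ᵀ * (Complex.exp (-(η / 2) * Complex.I) • V) = 1 := by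
  set W : Matrix (Fin d) (Fin d) ℂ := Vᵀ * V with hWdef
  -- second half follows from the first
  have main : ∀ η : ℝ, W = Complex.exp (η * Complex.I) • (1 : Matrix (Fin d) (Fin d) ℂ) →
      (Complex.exp (-(η / 2) * Complex.I) • V)ᵀ * (Complex.exp (-(η / 2) * Complex.I) • V) = 1 := by
    intro η hη
    rw [transpose_smul, smul_mul, Matrix.mul_smul, smul_smul, ← hWdef, hη, smul_smul,
      ← Complex.exp_add, ← Complex.exp_add]
    have harg : -(↑η / 2) * Complex.I + -(↑η / 2) * Complex.I + ↑η * Complex.I = 0 := by ring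
    rw [harg, Complex.exp_zero, one_smul]
  -- trivial case d = 0
  rcases Nat.eq_zero_or_pos d with hd | hd
  · subst hd
    refine ⟨0, ?_, ?_⟩
    · ext i _; exact i.elim0
    · apply main 0
      ext i _; exact i.elim0
  -- W is unitary
  have hVVH : V * Vᴴ = 1 := mul_eq_one_comm.mp hV
  have hWu : Wᴴ * W = 1 := by
    have h1 : (Vᵀ)ᴴ * Vᵀ = (V * Vᴴ)ᵀ := by
      ext i j
      simp [mul_apply, conjTranspose_apply, transpose_apply, mul_comm]
    rw [hVVH, transpose_one] at h1
    calc Wᴴ * W = Vᴴ * ((Vᵀ)ᴴ * Vᵀ) * V := by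
          rw [hWdef, Matrix.conjTranspose_mul]; noncomm_ring
      _ = 1 := by rw [h1, Matrix.mul_one, hV]
  -- diagonal entries have modulus one
  have hdiag : ∀ j, ‖W j j‖ = 1 := by
    intro j
    have hψ := h (Pi.single j 1) (by
      simp [dotProduct, Pi.single_apply, apply_ite, Finset.sum_ite_eq'])
    simpa [dotProduct, mulVec_single, Pi.single_apply, apply_ite, mul_ite, ite_mul,
      Finset.sum_ite_eq'] using hψ
  -- off-diagonal entries vanish
  have hoff : ∀ i j, i ≠ j → W i j = 0 := by
    intro i j hij
    have hcol : ∑ k, Complex.normSq (W k j) = 1 := by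
      have h2 := congrArg (fun M => (M j j).re) hWu
      simpa [mul_apply, conjTranspose_apply, one_apply, Complex.normSq_eq_conj_mul_self,
        Complex.re_sum, Complex.normSq_apply] using h2
    have hjj : Complex.normSq (W j j) = 1 := by
      rw [← Complex.sq_norm, hdiag j]; norm_num
    have hrest : ∑ k ∈ Finset.univ \ {j}, Complex.normSq (W k j) = 0 := by
      have h3 : ∑ k ∈ Finset.univ \ {j}, Complex.normSq (W k j)
          + ∑ k ∈ {j}, Complex.normSq (W k j) = 1 := by
        rw [Finset.sum_sdiff (Finset.singleton_subset_iff.mpr (Finset.mem_univ j))]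
        exact hcol
      simp only [Finset.sum_singleton, hjj] at h3
      linarith
    have hz : Complex.normSq (W i j) = 0 :=
      (Finset.sum_eq_zero_iff_of_nonneg
        (fun k _ => Complex.normSq_nonneg (W k j))).mp hrest i (by simp [hij])
    exact Complex.normSq_eq_zero.mp hz
  -- diagonal entries are all equal
  have hsame : ∀ i j, i ≠ j → W i i = W j j := by
    intro i j hij
    have hji : j ≠ i := hij.symm
    set a : ℂ := (((Real.sqrt 2)⁻¹ : ℝ) : ℂ) with ha_def
    have ha2 : a * a = 1 / 2 := by
      rw [ha_def, ← Complex.ofReal_mul, ← mul_inv, Real.mul_self_sqrt (by norm_num : (0:ℝ) ≤ 2)]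
      norm_num
    have hstar : ∀ p : Fin d, star (Pi.single p (1:ℂ)) = (Pi.single p 1 : Fin d → ℂ) := by
      intro p; funext k
      simp [Pi.star_apply, Pi.single_apply, apply_ite]
    set ψ : Fin d → ℂ := a • (Pi.single i 1 + Pi.single j 1) with hψdef
    have hstarψ : star ψ = a • (Pi.single i 1 + Pi.single j 1) := by
      rw [hψdef, star_smul, star_add, hstar, hstar]
      congr 1
      simp [ha_def, Complex.star_def, Complex.conj_ofReal]
    have hunit : star ψ ⬝ᵥ ψ = 1 := by
      rw [hstarψ, hψdef]
      simp [smul_dotProduct, dotProduct_smul, add_dotProduct, dotProduct_add,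
        dotProduct_single, single_dotProduct, Pi.single_apply, hij, hji, smul_eq_mul]
      rw [ha2]; norm_num
    have hdot : star ψ ⬝ᵥ W *ᵥ ψ = (W i i + W j j) / 2 := by
      rw [hstarψ, hψdef]
      simp [smul_dotProduct, dotProduct_smul, add_dotProduct, dotProduct_add,
        mulVec_add, mulVec_smul, mulVec_single, dotProduct_single, single_dotProduct,
        hoff i j hij, hoff j i hji, smul_eq_mul]
      rw [show a * (a * W i i) + a * (a * W j j) = a * a * (W i i + W j j) by ring, ha2]
      ring
    have habs := h ψ hunit
    rw [hdot] at habs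
    have habs2 : ‖W i i + W j j‖ = 2 := by
      rw [norm_div] at habs
      simp at habs
      linarith
    exact aux_eq_of_abs (hdiag i) (hdiag j) habs2
  -- assemble
  set j0 : Fin d := ⟨0, hd⟩
  set c : ℂ := W j0 j0 with hcdef
  have hc : ‖c‖ = 1 := hdiag j0
  have hexp : Complex.exp (Complex.arg c * Complex.I) = c := by
    have h4 := Complex.norm_mul_exp_arg_mul_I c
    rw [hc] at h4
    simpa using h4
  have hWeq : W = Complex.exp ((Complex.arg c : ℝ) * Complex.I) • (1 : Matrix (Fin d) (Fin d) ℂ) := by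
    rw [hexp]
    ext p q
    by_cases hpq : p = q
    · subst hpq
      simp only [Matrix.smul_apply, Matrix.one_apply_eq, smul_eq_mul, mul_one]
      by_cases hp : p = j0
      · rw [hp]
      · exact hsame p j0 hp
    · simp [Matrix.smul_apply, Matrix.one_apply, hpq, hoff p q hpq]
  exact ⟨Complex.arg c, hWeq, main _ hWeq⟩
end

section
/- If a single-qubit density matrix ρ (a 2×2 positive semidefinite Hermitian matrix with trace 1) satisfies tr(ρ ρ*) = 0, where ρ* is the entrywise complex conjugate, then ρ = |+i⟩⟨+i| or ρ = |−i⟩⟨−i|, where |±i⟩ = (1/√2)(|0⟩ ± i|1⟩). -/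
open Matrix ComplexOrder Complex

set_option maxHeartbeats 1600000 in
theorem qubit_orthogonal_to_conjugate {ρ : Matrix (Fin 2) (Fin 2) ℂ}
    (hρ : ρ.PosSemidef) (hρ1 : ρ.trace = 1)
    (h : (ρ * ρ.map (starRingEnd ℂ)).trace = 0) :
    ρ = !![1/2, -Complex.I/2; Complex.I/2, 1/2] ∨
      ρ = !![1/2, Complex.I/2; -Complex.I/2, 1/2] := by
  obtain ⟨herm, hq⟩ := Matrix.posSemidef_iff_dotProduct_mulVec.mp hρ
  have h10 : ρ 1 0 = (starRingEnd ℂ) (ρ 0 1) := by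
    conv_lhs => rw [← herm]
    simp [conjTranspose_apply]
  have h00 : (ρ 0 0).im = 0 := by
    have : ρ 0 0 = (starRingEnd ℂ) (ρ 0 0) := by
      conv_lhs => rw [← herm]; simp [conjTranspose_apply]
    have := congrArg Complex.im this
    simp [Complex.ext_iff] at this; linarith
  have h11 : (ρ 1 1).im = 0 := by
    have : ρ 1 1 = (starRingEnd ℂ) (ρ 1 1) := by
      conv_lhs => rw [← herm]; simp [conjTranspose_apply]
    have := congrArg Complex.im this
    simp [Complex.ext_iff] at this; linarith
  have q1 := hq ![1, 0]
  have q2 := hq ![0, 1]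
  have q3 := hq ![ρ 0 1, -(ρ 0 0)]
  have q4 := hq ![-(ρ 1 1), ρ 1 0]
  simp only [dotProduct, mulVec, Fin.sum_univ_two, h10, Complex.nonneg_iff,
    Matrix.cons_val_zero, Matrix.cons_val_one, Matrix.head_cons, Pi.star_apply,
    star_one, star_zero, RCLike.star_def] at q1 q2 q3 q4
  simp [Complex.ext_iff, Complex.mul_re, Complex.mul_im, h00, h11] at q1 q2 q3 q4
  rw [Matrix.trace_fin_two] at hρ1 h
  simp only [Matrix.mul_apply, Fin.sum_univ_two, Matrix.map_apply, h10] at h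
  simp [Complex.ext_iff, Complex.mul_re, Complex.mul_im, h00, h11] at h hρ1
  set a := (ρ 0 0).re with ha
  set d := (ρ 1 1).re with hd
  set x := (ρ 0 1).re with hx
  set y := (ρ 0 1).im with hy
  obtain ⟨q3, -⟩ := q3
  obtain ⟨q4, -⟩ := q4
  obtain ⟨h, -⟩ := h
  -- derive ad ≥ x² + y²
  have hdet : x^2 + y^2 ≤ a * d := by nlinarith [q3, q4, hρ1]
  have hx0 : x = 0 := by nlinarith [sq_nonneg x, sq_nonneg (a - d)]
  have had : a = 1/2 ∧ d = 1/2 := by constructor <;> nlinarith [sq_nonneg (a - d)]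
  obtain ⟨ha2, hd2⟩ := had
  have hy2 : y*y = 1/4 := by rw [ha2, hd2, hx0] at h; linarith
  have hycase : y = 1/2 ∨ y = -(1/2) := by
    have : (y - 1/2) * (y + 1/2) = 0 := by linear_combination hy2
    rcases mul_eq_zero.mp this with h' | h'
    · left; linarith
    · right; linarith
  rcases hycase with hy1 | hy1
  · right
    ext i j
    fin_cases i <;> fin_cases j <;>
      simp [Complex.ext_iff, h10] <;>
      constructor <;>
      simp [← ha, ← hd, ← hx, ← hy, h00, h11, ha2, hd2, hx0, hy1, Complex.div_im, Complex.div_re] <;> norm_num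
  · left
    ext i j
    fin_cases i <;> fin_cases j <;>
      simp [Complex.ext_iff, h10] <;>
      constructor <;>
      simp [← ha, ← hd, ← hx, ← hy, h00, h11, ha2, hd2, hx0, hy1, Complex.div_im, Complex.div_re] <;> norm_num
end

section
/- Let U be a real orthogonal matrix, V a unitary, and suppose for all unit vectors ψ: U(ρ ⊗ |0⟩⟨0| ⊗ |ψ⟩⟨ψ|)U† = ρ' ⊗ |0'⟩⟨0'| ⊗ V|ψ⟩⟨ψ|V†, where ρ' does not depend on ψ. Then for every unit vector ψ: tr(ρρ*) = tr(ρ'ρ'*)·|⟨ψ| VᵀV |ψ⟩|². In particular, choosing ψ an eigenvector of VᵀV, tr(ρρ*) = tr(ρ'ρ'*). -/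
open Matrix ComplexOrder Kronecker

private lemma trace_vecMulVec {n : Type*} [Fintype n] (a b : n → ℂ) :
    (vecMulVec a b).trace = a ⬝ᵥ b := by
  simp [Matrix.trace, Matrix.diag, vecMulVec_apply, dotProduct]

private lemma mul_vecMulVec {n : Type*} [Fintype n] (M : Matrix n n ℂ) (a b : n → ℂ) :
    M * vecMulVec a b = vecMulVec (M *ᵥ a) b := by
  ext i j
  simp [Matrix.mul_apply, vecMulVec_apply, Matrix.mulVec, dotProduct, Finset.sum_mul, mul_assoc]

private lemma vecMulVec_mul {n : Type*} [Fintype n] (a b : n → ℂ) (M : Matrix n n ℂ) :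
    vecMulVec a b * M = vecMulVec a (b ᵥ* M) := by
  ext i j
  simp [Matrix.mul_apply, vecMulVec_apply, Matrix.vecMul, dotProduct, Finset.mul_sum, mul_assoc]

private lemma trace_vmv_mul_vmv {n : Type*} [Fintype n] (a b c d : n → ℂ) :
    (vecMulVec a b * vecMulVec c d).trace = (b ⬝ᵥ c) * (d ⬝ᵥ a) := by
  rw [_root_.vecMulVec_mul, _root_.trace_vecMulVec]
  simp only [dotProduct, Matrix.vecMul, vecMulVec_apply, Finset.mul_sum, Finset.sum_mul]
  exact Finset.sum_congr rfl fun i _ => Finset.sum_congr rfl fun j _ => by ring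

private lemma mapConj_vecMulVec {n m : Type*} (a : n → ℂ) (b : m → ℂ) :
    (vecMulVec a b).map (starRingEnd ℂ) = vecMulVec (star a) (star b) := by
  ext i j; simp [vecMulVec_apply, _root_.map_mul]

private lemma mapConj_kronecker {l m n p : Type*} (A : Matrix l m ℂ) (B : Matrix n p ℂ) :
    (A ⊗ₖ B).map (starRingEnd ℂ) = A.map (starRingEnd ℂ) ⊗ₖ B.map (starRingEnd ℂ) := by
  ext ⟨i,j⟩ ⟨k,l⟩; simp [Matrix.kroneckerMap_apply, _root_.map_mul]

private lemma conj_quadForm {n : Type*} [Fintype n] (M : Matrix n n ℂ) (ψ : n → ℂ) :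
    (starRingEnd ℂ) (star ψ ⬝ᵥ M *ᵥ ψ) = star ψ ⬝ᵥ Mᴴ *ᵥ ψ := by
  simp only [dotProduct, Matrix.mulVec, Finset.mul_sum, map_sum, _root_.map_mul, Pi.star_apply,
    conjTranspose_apply, RingHom.id_apply, Complex.conj_conj, dotProduct]
  rw [Finset.sum_comm]
  refine Finset.sum_congr rfl fun k _ => Finset.sum_congr rfl fun j _ => by
    simp [RingHomCompTriple.comp_apply]; ring

private lemma trace_conj_cancel {n : Type*} [Fintype n] [DecidableEq n]
    (U A B : Matrix n n ℂ) (hU : Uᵀ * U = 1) :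
    (U * A * Uᵀ * (U * B * Uᵀ)).trace = (A * B).trace := by
  have h1 : U * A * Uᵀ * (U * B * Uᵀ) = U * (A * B) * Uᵀ := by
    calc U * A * Uᵀ * (U * B * Uᵀ) = U * (A * ((Uᵀ * U) * (B * Uᵀ))) := by
          simp only [Matrix.mul_assoc]
      _ = U * (A * B) * Uᵀ := by simp only [hU, Matrix.one_mul, Matrix.mul_assoc]
  rw [h1, Matrix.trace_mul_cycle U (A*B) Uᵀ, ← Matrix.mul_assoc, hU, Matrix.one_mul]

private lemma conjT_transpose {n m : Type*} (V : Matrix n m ℂ) :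
    (Vᵀ)ᴴ = V.map (starRingEnd ℂ) := by
  ext i j; simp [Matrix.conjTranspose_apply]

theorem simulation_trace_condition {mρ m0 mψ : Type*}
    [Fintype mρ] [DecidableEq mρ] [Fintype m0] [DecidableEq m0]
    [Fintype mψ] [DecidableEq mψ] [Nonempty mψ]
    (U : Matrix ((mρ × m0) × mψ) ((mρ × m0) × mψ) ℂ)
    (V : Matrix mψ mψ ℂ) (ρ ρ' : Matrix mρ mρ ℂ) (v v' : m0 → ℂ)
    (hUorth : Uᵀ * U = 1) (hUreal : U.map (starRingEnd ℂ) = U)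
    (hV : Vᴴ * V = 1)
    (hρ : ρ.PosSemidef) (hρ1 : ρ.trace = 1)
    (hρ' : ρ'.PosSemidef) (hρ'1 : ρ'.trace = 1)
    (hv : star v ⬝ᵥ v = 1) (hv' : star v' ⬝ᵥ v' = 1)
    (hvreal : ∀ i, (v i).im = 0) (hv'real : ∀ i, (v' i).im = 0)
    (hsim : ∀ ψ : mψ → ℂ, star ψ ⬝ᵥ ψ = 1 →
      U * ((ρ ⊗ₖ vecMulVec v (star v)) ⊗ₖ vecMulVec ψ (star ψ)) * Uᴴ =
        (ρ' ⊗ₖ vecMulVec v' (star v')) ⊗ₖ (V * vecMulVec ψ (star ψ) * Vᴴ)) :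
    (∀ ψ : mψ → ℂ, star ψ ⬝ᵥ ψ = 1 →
      (ρ * ρ.map (starRingEnd ℂ)).trace =
        (ρ' * ρ'.map (starRingEnd ℂ)).trace *
          ((‖star ψ ⬝ᵥ (Vᵀ * V) *ᵥ ψ‖ ^ 2 : ℝ) : ℂ)) ∧
      (ρ * ρ.map (starRingEnd ℂ)).trace = (ρ' * ρ'.map (starRingEnd ℂ)).trace := by
  have hvs : star v = v := funext fun i => Complex.conj_eq_iff_im.mpr (hvreal i)
  have hv's : star v' = v' := funext fun i => Complex.conj_eq_iff_im.mpr (hv'real i)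
  have hvv : v ⬝ᵥ v = 1 := by rw [← hv, hvs]
  have hv'v : v' ⬝ᵥ v' = 1 := by rw [← hv', hv's]
  have hUT : Uᴴ = Uᵀ := by
    ext i j
    simpa [Matrix.conjTranspose_apply, Matrix.map_apply] using congrFun (congrFun hUreal j) i
  have hUconjT : Uᵀ.map (starRingEnd ℂ) = Uᵀ := by
    ext i j
    simpa [Matrix.map_apply] using congrFun (congrFun hUreal j) i
  have hVHconj : (Vᴴ).map (starRingEnd ℂ) = Vᵀ := by
    ext i j; simp [Matrix.conjTranspose_apply, Matrix.map_apply]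
  have hVmul : Vᴴ * V.map (starRingEnd ℂ) = (Vᵀ * V)ᴴ := by
    rw [Matrix.conjTranspose_mul, conjT_transpose]
  have key : ∀ ψ : mψ → ℂ, star ψ ⬝ᵥ ψ = 1 →
      (ρ * ρ.map (starRingEnd ℂ)).trace =
        (ρ' * ρ'.map (starRingEnd ℂ)).trace *
          ((‖star ψ ⬝ᵥ (Vᵀ * V) *ᵥ ψ‖ ^ 2 : ℝ) : ℂ) := by
    intro ψ hψ
    have hψ' : star (star ψ) ⬝ᵥ star ψ = 1 := by
      rw [star_star, dotProduct_comm]; exact hψ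
    have h1 := hsim ψ hψ
    have h2 := hsim (star ψ) hψ'
    rw [hUT] at h1 h2
    have h2c := congrArg (fun M => M.map (starRingEnd ℂ)) h2
    simp only [Matrix.map_mul, hUreal, hUconjT, hVHconj, mapConj_kronecker,
      mapConj_vecMulVec, star_star] at h2c
    have E := congrArg Matrix.trace (congrArg₂ HMul.hMul h1 h2c)
    rw [trace_conj_cancel _ _ _ hUorth] at E
    simp only [← Matrix.mul_kronecker_mul] at E
    simp only [Matrix.trace_kronecker] at E
    simp only [trace_vmv_mul_vmv] at E
    rw [_root_.mul_vecMulVec V ψ (star ψ), _root_.vecMulVec_mul (V *ᵥ ψ) (star ψ) Vᴴ,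
      _root_.mul_vecMulVec (V.map (starRingEnd ℂ)) ψ (star ψ),
      _root_.vecMulVec_mul (V.map (starRingEnd ℂ) *ᵥ ψ) (star ψ) Vᵀ,
      trace_vmv_mul_vmv] at E
    rw [hvs, hv's, hvv, hv'v, hψ, ← dotProduct_mulVec, ← dotProduct_mulVec,
      mulVec_mulVec, mulVec_mulVec, hVmul, ← conj_quadForm] at E
    have habs : ((‖star ψ ⬝ᵥ (Vᵀ * V) *ᵥ ψ‖ ^ 2 : ℝ) : ℂ) =
        (starRingEnd ℂ) (star ψ ⬝ᵥ (Vᵀ * V) *ᵥ ψ) * (star ψ ⬝ᵥ (Vᵀ * V) *ᵥ ψ) := by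
      rw [Complex.sq_norm, mul_comm, Complex.mul_conj]
    rw [habs]
    simpa using E
  refine ⟨key, ?_⟩
  have hVVH : V * Vᴴ = 1 := mul_eq_one_comm.mp hV
  have hconjVVH : V.map (starRingEnd ℂ) * Vᵀ = 1 := by
    have h := congrArg (fun M => M.map (starRingEnd ℂ)) hVVH
    simpa [Matrix.map_mul, hVHconj, Matrix.map_one] using h
  have hWU : (Vᵀ * V)ᴴ * (Vᵀ * V) = 1 := by
    rw [Matrix.conjTranspose_mul, conjT_transpose]
    calc Vᴴ * V.map (starRingEnd ℂ) * (Vᵀ * V)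
        = Vᴴ * ((V.map (starRingEnd ℂ) * Vᵀ) * V) := by simp only [Matrix.mul_assoc]
      _ = 1 := by rw [hconjVVH, Matrix.one_mul, hV]
  obtain ⟨μ, hμ⟩ := Module.End.exists_eigenvalue (Matrix.mulVecLin (Vᵀ * V))
  obtain ⟨x, hx⟩ := hμ.exists_hasEigenvector
  have hxe : (Vᵀ * V) *ᵥ x = μ • x := hx.apply_eq_smul
  have hx0 : x ≠ 0 := hx.right
  set R : ℝ := ∑ i, Complex.normSq (x i) with hR
  have hcx : star x ⬝ᵥ x = (R : ℂ) := by
    push_cast [hR]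
    simp [dotProduct, Complex.normSq_eq_conj_mul_self]
  have hRpos : 0 < R := by
    obtain ⟨i, hi⟩ := Function.ne_iff.mp hx0
    exact Finset.sum_pos' (fun j _ => Complex.normSq_nonneg _)
      ⟨i, Finset.mem_univ i, Complex.normSq_pos.mpr hi⟩
  have hRne : (R : ℂ) ≠ 0 := by exact_mod_cast hRpos.ne'
  set s : ℝ := Real.sqrt R with hsdef
  have hs2 : (s : ℂ) * s = (R : ℂ) := by
    norm_cast; exact Real.mul_self_sqrt hRpos.le
  have hsne : (s : ℂ) ≠ 0 := by
    have : s ≠ 0 := by positivity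
    exact_mod_cast this
  set ψ : mψ → ℂ := (s : ℂ)⁻¹ • x with hψdef
  have hstar : star ψ = (s : ℂ)⁻¹ • star x := by
    rw [hψdef, star_smul]
    congr 1
    simp [map_inv₀, Complex.conj_ofReal]
  have hψunit : star ψ ⬝ᵥ ψ = 1 := by
    rw [hstar, hψdef, smul_dotProduct, dotProduct_smul, hcx, smul_eq_mul,
      smul_eq_mul]
    field_simp
    rw [sq]; exact hs2.symm
  have hq : star ψ ⬝ᵥ (Vᵀ * V) *ᵥ ψ = μ := by
    rw [hstar, hψdef, Matrix.mulVec_smul, hxe, smul_dotProduct]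
    rw [dotProduct_smul, dotProduct_smul, hcx]
    simp only [smul_eq_mul]
    rw [← hs2]
    field_simp
  have h3 : star ((Vᵀ * V) *ᵥ x) ⬝ᵥ ((Vᵀ * V) *ᵥ x) = (R : ℂ) := by
    rw [Matrix.star_mulVec, ← Matrix.dotProduct_mulVec, Matrix.mulVec_mulVec, hWU,
      Matrix.one_mulVec, hcx]
  have h4 : star ((Vᵀ * V) *ᵥ x) ⬝ᵥ ((Vᵀ * V) *ᵥ x) =
      (starRingEnd ℂ) μ * μ * (R : ℂ) := by
    rw [hxe, star_smul, smul_dotProduct, dotProduct_smul, hcx]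
    simp only [smul_eq_mul, starRingEnd_apply]
    ring
  have hnorm : (starRingEnd ℂ) μ * μ = 1 := by
    have h5 : (starRingEnd ℂ) μ * μ * (R : ℂ) = 1 * (R : ℂ) := by
      rw [← h4, h3, one_mul]
    exact mul_right_cancel₀ hRne h5
  have habs1 : ((‖star ψ ⬝ᵥ (Vᵀ * V) *ᵥ ψ‖ ^ 2 : ℝ) : ℂ) = 1 := by
    rw [hq, Complex.sq_norm]
    rw [show ((Complex.normSq μ : ℝ) : ℂ) = μ * (starRingEnd ℂ) μ from (Complex.mul_conj μ).symm]
    rw [mul_comm]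
    exact hnorm
  rw [key ψ hψunit, habs1, mul_one]
end

section
/- If ρ satisfies the simulation equation of Definition 1 for some unitary V with real orthogonal U, and tr(ρρ*) ≠ 0, then |⟨ψ|VᵀV|ψ⟩|² = 1 for all unit vectors ψ, hence V = e^{iη/2}·W for a real orthogonal matrix W and some η ∈ ℝ. -/
set_option linter.unusedSectionVars false
set_option maxHeartbeats 1000000

open Matrix ComplexOrder Kronecker

section Aux
variable {m n p : Type*} [Fintype m] [Fintype n] [Fintype p]

lemma vmv_mul (a : m → ℂ) (b : n → ℂ) (c : n → ℂ) (d : p → ℂ) :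
    vecMulVec a b * vecMulVec c d = (b ⬝ᵥ c) • vecMulVec a d := by
  ext i j
  simp only [Matrix.mul_apply, vecMulVec_apply, Matrix.smul_apply, smul_eq_mul, dotProduct,
    Finset.sum_mul]
  exact Finset.sum_congr rfl fun k _ => by ring

lemma trace_vmv (a b : m → ℂ) : (vecMulVec a b).trace = a ⬝ᵥ b := by
  simp [Matrix.trace, Matrix.diag, vecMulVec_apply, dotProduct]

lemma vmv_mul_mat (a : m → ℂ) (b : n → ℂ) (N : Matrix n p ℂ) :
    vecMulVec a b * N = vecMulVec a (b ᵥ* N) := by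
  ext i j
  simp only [Matrix.mul_apply, vecMulVec_apply, vecMul, dotProduct]
  rw [Finset.mul_sum]
  exact Finset.sum_congr rfl fun k _ => by ring

lemma map_vmv (a : m → ℂ) (b : n → ℂ) :
    (vecMulVec a b).map (starRingEnd ℂ) = vecMulVec (star a) (star b) := by
  ext i j
  simp [Matrix.map_apply, vecMulVec_apply]

lemma map_kron {m' n' : Type*} (A : Matrix m n ℂ) (B : Matrix m' n' ℂ) :
    (A ⊗ₖ B).map (starRingEnd ℂ) = A.map (starRingEnd ℂ) ⊗ₖ B.map (starRingEnd ℂ) := by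
  ext ⟨i, i'⟩ ⟨j, j'⟩
  simp [Matrix.map_apply, kroneckerMap_apply]

lemma map_ct (M : Matrix m n ℂ) : Mᴴ.map (starRingEnd ℂ) = Mᵀ := by
  ext i j
  simp [Matrix.map_apply, conjTranspose_apply]

lemma t_ct (M : Matrix m n ℂ) : (Mᵀ)ᴴ = M.map (starRingEnd ℂ) := by
  ext i j
  simp [Matrix.map_apply, conjTranspose_apply]

lemma ct_t (M : Matrix m n ℂ) : (Mᴴ)ᵀ = M.map (starRingEnd ℂ) := by
  ext i j
  simp [Matrix.map_apply, conjTranspose_apply]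

lemma conj_dot (a : m → ℂ) (N : Matrix m m ℂ) (hN : Nᵀ = N) :
    starRingEnd ℂ (star a ⬝ᵥ N *ᵥ a) = star a ⬝ᵥ (N.map (starRingEnd ℂ)) *ᵥ a := by
  have hsymm : ∀ i j, N i j = N j i := fun i j => congrFun (congrFun hN j) i
  simp only [dotProduct, mulVec, dotProduct, map_sum, _root_.map_mul, Pi.star_apply,
    Complex.star_def, Complex.conj_conj, Matrix.map_apply, Finset.mul_sum]
  rw [Finset.sum_comm]
  refine Finset.sum_congr rfl fun j _ => Finset.sum_congr rfl fun i _ => ?_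
  rw [hsymm j i]
  ring

lemma dot_star_self (x : m → ℂ) :
    star x ⬝ᵥ x = ((∑ i, Complex.normSq (x i) : ℝ) : ℂ) := by
  push_cast
  simp [dotProduct, Complex.normSq_eq_conj_mul_self]

lemma sum_normSq_pos (x : m → ℂ) (hx : x ≠ 0) : 0 < ∑ i, Complex.normSq (x i) := by
  obtain ⟨i, hi⟩ := Function.ne_iff.mp hx
  exact Finset.sum_pos' (fun j _ => Complex.normSq_nonneg _)
    ⟨i, Finset.mem_univ i, Complex.normSq_pos.mpr hi⟩

end Aux

theorem nonzero_trace_implies_real_orthogonal {mρ m0 mψ : Type*}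
    [Fintype mρ] [DecidableEq mρ] [Fintype m0] [DecidableEq m0]
    [Fintype mψ] [DecidableEq mψ] [Nonempty mψ]
    (U : Matrix ((mρ × m0) × mψ) ((mρ × m0) × mψ) ℂ)
    (V : Matrix mψ mψ ℂ) (ρ ρ' : Matrix mρ mρ ℂ) (v v' : m0 → ℂ)
    (hUorth : Uᵀ * U = 1) (hUreal : U.map (starRingEnd ℂ) = U)
    (hV : Vᴴ * V = 1)
    (hρ : ρ.PosSemidef) (hρ1 : ρ.trace = 1)
    (hρ' : ρ'.PosSemidef) (hρ'1 : ρ'.trace = 1)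
    (hv : star v ⬝ᵥ v = 1) (hv' : star v' ⬝ᵥ v' = 1)
    (hvreal : ∀ i, (v i).im = 0) (hv'real : ∀ i, (v' i).im = 0)
    (hsim : ∀ ψ : mψ → ℂ, star ψ ⬝ᵥ ψ = 1 →
      U * ((ρ ⊗ₖ vecMulVec v (star v)) ⊗ₖ vecMulVec ψ (star ψ)) * Uᴴ =
        (ρ' ⊗ₖ vecMulVec v' (star v')) ⊗ₖ (V * vecMulVec ψ (star ψ) * Vᴴ))
    (hne : (ρ * ρ.map (starRingEnd ℂ)).trace ≠ 0) :
    (∀ ψ : mψ → ℂ, star ψ ⬝ᵥ ψ = 1 →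
      ‖star ψ ⬝ᵥ (Vᵀ * V) *ᵥ ψ‖ ^ 2 = 1) ∧
      ∃ (η : ℝ) (W : Matrix mψ mψ ℂ), Wᵀ * W = 1 ∧ W.map (starRingEnd ℂ) = W ∧
        V = Complex.exp ((η / 2 : ℝ) * Complex.I) • W := by
  classical
  have hvc : star v = v := funext fun i => Complex.conj_eq_iff_im.mpr (hvreal i)
  have hv'c : star v' = v' := funext fun i => Complex.conj_eq_iff_im.mpr (hv'real i)
  have hUH : Uᴴ = Uᵀ := by
    ext i j
    have := congrFun (congrFun hUreal j) i
    simpa [Matrix.conjTranspose_apply, Matrix.map_apply] using this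
  set M := Vᵀ * V with hMdef
  have hMsymm : Mᵀ = M := by rw [hMdef, transpose_mul, transpose_transpose]
  have hVV' : V * Vᴴ = 1 := mul_eq_one_comm.mp hV
  have hVcVt : V.map (starRingEnd ℂ) * Vᵀ = 1 := by
    have h1 : V.map (starRingEnd ℂ) * Vᵀ = (V * Vᴴ).map (starRingEnd ℂ) := by
      ext i j
      simp [Matrix.mul_apply, Matrix.map_apply, conjTranspose_apply, map_sum]
    rw [h1, hVV']
    exact Matrix.map_one _ (map_zero _) (map_one _)
  have hVNV : Vᴴ * V.map (starRingEnd ℂ) = M.map (starRingEnd ℂ) := by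
    ext i j
    simp [Matrix.mul_apply, Matrix.map_apply, conjTranspose_apply, transpose_apply, map_sum,
      hMdef]
  have hMM : Mᴴ * M = 1 := by
    have hMH : Mᴴ = Vᴴ * V.map (starRingEnd ℂ) := by
      rw [hMdef, conjTranspose_mul, t_ct]
    rw [hMH, hMdef, Matrix.mul_assoc, ← Matrix.mul_assoc (V.map (starRingEnd ℂ)), hVcVt,
      Matrix.one_mul, hV]
  have hMdot : ∀ x : mψ → ℂ, star (M *ᵥ x) ⬝ᵥ (M *ᵥ x) = star x ⬝ᵥ x := by
    intro x
    rw [star_mulVec, ← dotProduct_mulVec, mulVec_mulVec, hMM, one_mulVec]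
  -- the key trace identity
  have key : ∀ ψ : mψ → ℂ, star ψ ⬝ᵥ ψ = 1 →
      (ρ * ρ.map (starRingEnd ℂ)).trace =
        (ρ' * ρ'.map (starRingEnd ℂ)).trace *
          (starRingEnd ℂ (star ψ ⬝ᵥ M *ᵥ ψ) * (star ψ ⬝ᵥ M *ᵥ ψ)) := by
    intro ψ hψ
    have hvv : v ⬝ᵥ v = 1 := by have h := hv; rwa [hvc] at h
    have hv'v' : v' ⬝ᵥ v' = 1 := by have h := hv'; rwa [hv'c] at h
    have hψ2 : star (star ψ) ⬝ᵥ star ψ = 1 := by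
      rw [star_star, dotProduct_comm]; exact hψ
    have h1 := hsim ψ hψ
    have h2 := hsim (star ψ) hψ2
    rw [star_star, hUH] at h2
    rw [hUH] at h1
    rw [hvc, hv'c] at h1 h2
    have h2c := congrArg (fun X => X.map (starRingEnd ℂ)) h2
    simp only [Matrix.map_mul, map_kron, map_vmv, map_ct, star_star, hvc, hv'c, hUreal,
      Matrix.transpose_map] at h2c
    -- h2c : U * ((ρ.map c ⊗ₖ vecMulVec v v) ⊗ₖ vecMulVec ψ (star ψ)) * Uᵀ = ...
    have eL : ∀ (A B : Matrix ((mρ × m0) × mψ) ((mρ × m0) × mψ) ℂ),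
        ((U * A * Uᵀ) * (U * B * Uᵀ)).trace = (A * B).trace := by
      intro A B
      have e1 : (U * A * Uᵀ) * (U * B * Uᵀ) = U * (A * (B * Uᵀ)) := by
        simp only [Matrix.mul_assoc]
        rw [← Matrix.mul_assoc Uᵀ U, hUorth, Matrix.one_mul]
      rw [e1, Matrix.trace_mul_comm]
      simp only [Matrix.mul_assoc]
      rw [hUorth, Matrix.mul_one]
    have hinner : ((V * vecMulVec ψ (star ψ) * Vᴴ) *
        (V.map (starRingEnd ℂ) * vecMulVec ψ (star ψ) * Vᵀ)).trace
        = starRingEnd ℂ (star ψ ⬝ᵥ M *ᵥ ψ) * (star ψ ⬝ᵥ M *ᵥ ψ) := by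
      have e : (V * vecMulVec ψ (star ψ) * Vᴴ) *
          (V.map (starRingEnd ℂ) * vecMulVec ψ (star ψ) * Vᵀ)
          = V * ((vecMulVec ψ (star ψ) * M.map (starRingEnd ℂ) * vecMulVec ψ (star ψ)) * Vᵀ) := by
        simp only [Matrix.mul_assoc]
        rw [← Matrix.mul_assoc Vᴴ (V.map (starRingEnd ℂ)), hVNV]
      rw [e, Matrix.trace_mul_comm, Matrix.mul_assoc _ Vᵀ V, ← hMdef]
      rw [vmv_mul_mat, vmv_mul, Matrix.smul_mul, vmv_mul_mat, Matrix.trace_smul, trace_vmv]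
      rw [smul_eq_mul, ← dotProduct_mulVec, dotProduct_comm ψ, ← dotProduct_mulVec,
        conj_dot ψ M hMsymm]
    calc (ρ * ρ.map (starRingEnd ℂ)).trace
        = (((ρ ⊗ₖ vecMulVec v v) ⊗ₖ vecMulVec ψ (star ψ)) *
            ((ρ.map (starRingEnd ℂ) ⊗ₖ vecMulVec v v) ⊗ₖ vecMulVec ψ (star ψ))).trace := by
          rw [← Matrix.mul_kronecker_mul, ← Matrix.mul_kronecker_mul, vmv_mul, vmv_mul, hvv, hψ,
            one_smul, one_smul, Matrix.trace_kronecker, Matrix.trace_kronecker, trace_vmv,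
            trace_vmv, hvv, dotProduct_comm ψ, hψ, mul_one, mul_one]
      _ = ((U * ((ρ ⊗ₖ vecMulVec v v) ⊗ₖ vecMulVec ψ (star ψ)) * Uᵀ) *
            (U * ((ρ.map (starRingEnd ℂ) ⊗ₖ vecMulVec v v) ⊗ₖ vecMulVec ψ (star ψ)) * Uᵀ)).trace :=
          (eL _ _).symm
      _ = (((ρ' ⊗ₖ vecMulVec v' v') ⊗ₖ (V * vecMulVec ψ (star ψ) * Vᴴ)) *
            ((ρ'.map (starRingEnd ℂ) ⊗ₖ vecMulVec v' v') ⊗ₖ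
              (V.map (starRingEnd ℂ) * vecMulVec ψ (star ψ) * Vᵀ))).trace := by
          rw [h1, h2c]
      _ = (ρ' * ρ'.map (starRingEnd ℂ)).trace *
            (starRingEnd ℂ (star ψ ⬝ᵥ M *ᵥ ψ) * (star ψ ⬝ᵥ M *ᵥ ψ)) := by
          rw [← Matrix.mul_kronecker_mul, ← Matrix.mul_kronecker_mul, vmv_mul, hv'v', one_smul,
            Matrix.trace_kronecker, Matrix.trace_kronecker, trace_vmv, hinner, hv'v', mul_one]
  -- an eigenvector of M
  obtain ⟨μ0, hμ0⟩ := Module.End.exists_eigenvalue (Matrix.mulVecLin M)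
  obtain ⟨x, hx⟩ := hμ0.exists_hasEigenvector
  have hx0 : x ≠ 0 := hx.right
  have hxe : M *ᵥ x = μ0 • x := hx.apply_eq_smul
  -- normalize it
  have hnormalize : ∀ y : mψ → ℂ, y ≠ 0 → ∃ t : ℝ, 0 < t ∧
      star (((t : ℂ)) • y) ⬝ᵥ (((t : ℂ)) • y) = 1 := by
    intro y hy
    set s := ∑ i, Complex.normSq (y i) with hs
    have hspos : 0 < s := sum_normSq_pos y hy
    refine ⟨(Real.sqrt s)⁻¹, by positivity, ?_⟩
    rw [star_smul, smul_dotProduct, dotProduct_smul, dot_star_self, ← hs]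
    rw [Complex.star_def, Complex.conj_ofReal, smul_eq_mul, smul_eq_mul]
    have h1 : (Real.sqrt s)⁻¹ * ((Real.sqrt s)⁻¹ * s) = 1 := by
      rw [← mul_assoc, ← mul_inv, Real.mul_self_sqrt hspos.le]
      field_simp
    exact_mod_cast congrArg (Complex.ofReal) h1
  -- unit eigenvector
  obtain ⟨t, ht, hψ0u⟩ := hnormalize x hx0
  set ψ0 : mψ → ℂ := (t : ℂ) • x with hψ0def
  have hψ0e : M *ᵥ ψ0 = μ0 • ψ0 := by
    rw [hψ0def, mulVec_smul, hxe, smul_comm]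
  have hq0 : star ψ0 ⬝ᵥ M *ᵥ ψ0 = μ0 := by
    rw [hψ0e, dotProduct_smul, hψ0u, smul_eq_mul, mul_one]
  have hμ0unit : starRingEnd ℂ μ0 * μ0 = 1 := by
    have h := hMdot ψ0
    rw [hψ0e, hψ0u, star_smul, smul_dotProduct, dotProduct_smul, hψ0u] at h
    simpa [Complex.star_def, smul_eq_mul] using h
  have htr' : (ρ * ρ.map (starRingEnd ℂ)).trace = (ρ' * ρ'.map (starRingEnd ℂ)).trace := by
    have h := key ψ0 hψ0u
    rw [hq0, hμ0unit, mul_one] at h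
    exact h
  have habs : ∀ ψ : mψ → ℂ, star ψ ⬝ᵥ ψ = 1 →
      starRingEnd ℂ (star ψ ⬝ᵥ M *ᵥ ψ) * (star ψ ⬝ᵥ M *ᵥ ψ) = 1 := by
    intro ψ hψ
    have h := key ψ hψ
    rw [← htr'] at h
    nth_rewrite 1 [← mul_one ((ρ * ρ.map (starRingEnd ℂ)).trace)] at h
    exact (mul_left_cancel₀ hne h).symm
  have habs' : ∀ ψ : mψ → ℂ, star ψ ⬝ᵥ ψ = 1 →
      ‖star ψ ⬝ᵥ M *ᵥ ψ‖ ^ 2 = 1 := by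
    intro ψ hψ
    rw [Complex.sq_norm]
    have h := habs ψ hψ
    rw [← Complex.normSq_eq_conj_mul_self] at h
    exact_mod_cast h
  refine ⟨habs', ?_⟩
  -- rigidity: every unit vector is an eigenvector
  have heigunit : ∀ ψ : mψ → ℂ, star ψ ⬝ᵥ ψ = 1 → ∃ r : ℂ, M *ᵥ ψ = r • ψ := by
    intro ψ hψ
    let xE : EuclideanSpace ℂ mψ := WithLp.toLp 2 ψ
    let yE : EuclideanSpace ℂ mψ := WithLp.toLp 2 (M *ᵥ ψ)
    have hip : (inner ℂ xE yE : ℂ) = star ψ ⬝ᵥ M *ᵥ ψ := by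
      rw [PiLp.inner_apply]; simp [xE, yE, RCLike.inner_apply, dotProduct, mul_comm]
    have hxx : (inner ℂ xE xE : ℂ) = 1 := by
      rw [show (inner ℂ xE xE : ℂ) = star ψ ⬝ᵥ ψ by
        rw [PiLp.inner_apply]; simp [xE, RCLike.inner_apply, dotProduct, mul_comm]; exact Finset.sum_congr rfl fun i _ => by rw [Complex.mul_conj, Complex.normSq_eq_norm_sq]; norm_cast, hψ]
    have hyy : (inner ℂ yE yE : ℂ) = 1 := by
      rw [show (inner ℂ yE yE : ℂ) = star (M *ᵥ ψ) ⬝ᵥ (M *ᵥ ψ) by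
        rw [PiLp.inner_apply]; simp [yE, RCLike.inner_apply, dotProduct, mul_comm]; exact Finset.sum_congr rfl fun i _ => by rw [Complex.mul_conj, Complex.normSq_eq_norm_sq]; norm_cast, hMdot, hψ]
    have hnx : ‖xE‖ = 1 := by
      have h := inner_self_eq_norm_sq_to_K (𝕜 := ℂ) xE
      rw [hxx] at h
      have h3 := h.symm
      rw [← RCLike.ofReal_pow, ← RCLike.ofReal_one (K := ℂ)] at h3
      have h2 : ‖xE‖ ^ 2 = 1 := RCLike.ofReal_inj.mp h3
      nlinarith [norm_nonneg xE]
    have hny : ‖yE‖ = 1 := by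
      have h := inner_self_eq_norm_sq_to_K (𝕜 := ℂ) yE
      rw [hyy] at h
      have h3 := h.symm
      rw [← RCLike.ofReal_pow, ← RCLike.ofReal_one (K := ℂ)] at h3
      have h2 : ‖yE‖ ^ 2 = 1 := RCLike.ofReal_inj.mp h3
      nlinarith [norm_nonneg yE]
    have hq1 : ‖(inner ℂ xE yE : ℂ)‖ = 1 := by
      rw [hip]
      have h := habs' ψ hψ
      nlinarith [norm_nonneg (star ψ ⬝ᵥ M *ᵥ ψ)]
    have hx0' : xE ≠ 0 := by
      intro h; rw [h, norm_zero] at hnx; exact one_ne_zero hnx.symm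
    have hy0' : yE ≠ 0 := by
      intro h; rw [h, norm_zero] at hny; exact one_ne_zero hny.symm
    have hCS : ‖(inner ℂ xE yE : ℂ)‖ = ‖xE‖ * ‖yE‖ := by rw [hq1, hnx, hny, mul_one]
    obtain ⟨r, -, hr⟩ := (norm_inner_eq_norm_iff hx0' hy0').mp hCS
    exact ⟨r, by have := congrArg WithLp.ofLp hr; simpa [xE, yE] using this⟩
  have heigall : ∀ y : mψ → ℂ, y ≠ 0 → ∃ r : ℂ, M *ᵥ y = r • y := by
    intro y hy
    obtain ⟨t', ht', hunit⟩ := hnormalize y hy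
    obtain ⟨r, hr⟩ := heigunit ((t' : ℂ) • y) hunit
    refine ⟨r, ?_⟩
    have ht0 : (t' : ℂ) ≠ 0 := by exact_mod_cast ht'.ne'
    have h2 : (t' : ℂ) • (M *ᵥ y) = (t' : ℂ) • (r • y) := by
      rw [← mulVec_smul, hr, smul_comm]
    exact smul_right_injective (mψ → ℂ) ht0 h2
  have hsingle0 : ∀ i : mψ, (Pi.single i 1 : mψ → ℂ) ≠ 0 := by
    intro i h
    have := congrFun h i
    simp at this
  choose r hr using fun i => heigall (Pi.single i 1) (hsingle0 i)
  set i0 := Classical.arbitrary mψ with hi0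
  have hrconst : ∀ j, r j = r i0 := by
    intro j
    rcases eq_or_ne j i0 with h | h
    · rw [h]
    · obtain ⟨cc, hcc⟩ := heigall (Pi.single j 1 + Pi.single i0 1) (by
        intro hzero
        have := congrFun hzero j
        simp [Pi.single_apply, h] at this)
      rw [mulVec_add, hr j, hr i0] at hcc
      have hj := congrFun hcc j
      have hi := congrFun hcc i0
      simp [Pi.single_apply, h, Ne.symm h] at hj hi
      rw [hj, hi]
  have hMdiag : M = r i0 • (1 : Matrix mψ mψ ℂ) := by
    ext i j
    have h := congrFun (hr j) i
    simp only [mulVec, dotProduct, Pi.single_apply, mul_ite, mul_one, mul_zero,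
      Finset.sum_ite_eq', Finset.mem_univ, if_true, Pi.smul_apply, smul_eq_mul] at h
    rw [h, hrconst j]
    simp [Matrix.smul_apply, Matrix.one_apply, Pi.single_apply]
  have hsu : star (Pi.single i0 1 : mψ → ℂ) ⬝ᵥ Pi.single i0 1 = 1 := by
    simp [dotProduct, Pi.single_apply]
  have hμunit : starRingEnd ℂ (r i0) * r i0 = 1 := by
    have h := hMdot (Pi.single i0 1)
    rw [hr i0, hsu, star_smul, smul_dotProduct, dotProduct_smul, hsu] at h
    simpa [Complex.star_def, smul_eq_mul] using h
  have habs1 : ‖r i0‖ = 1 := by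
    have h : Complex.normSq (r i0) = 1 := by
      have h2 := hμunit
      rw [← Complex.normSq_eq_conj_mul_self] at h2
      exact_mod_cast h2
    rw [Complex.norm_def, h, Real.sqrt_one]
  have hμexp : r i0 = Complex.exp (((r i0).arg : ℂ) * Complex.I) := by
    conv_lhs => rw [← Complex.norm_mul_exp_arg_mul_I (r i0)]
    rw [habs1, Complex.ofReal_one, one_mul]
  set δ : ℂ := (((r i0).arg / 2 : ℝ) : ℂ) * Complex.I with hδdef
  have hδ2 : ((r i0).arg : ℂ) * Complex.I = δ + δ := by
    rw [hδdef]; push_cast; ring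
  set W := Complex.exp (-δ) • V with hWdef
  have hWtW : Wᵀ * W = 1 := by
    rw [hWdef, Matrix.transpose_smul, Matrix.smul_mul, Matrix.mul_smul, smul_smul, ← hMdef,
      hMdiag, smul_smul]
    have hsc : Complex.exp (-δ) * Complex.exp (-δ) * r i0 = 1 := by
      rw [hμexp, hδ2, ← Complex.exp_add, ← Complex.exp_add]
      have h0 : -δ + -δ + (δ + δ) = 0 := by ring
      rw [h0, Complex.exp_zero]
    rw [hsc, one_smul]
  have hconjδ : (starRingEnd ℂ) (-δ) = δ := by
    rw [hδdef]
    simp only [map_neg, _root_.map_mul, map_div₀, Complex.conj_ofReal, Complex.conj_I,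
      map_ofNat, mul_neg, neg_neg, Complex.ofReal_div]
  have hWct : Wᴴ = Complex.exp δ • Vᴴ := by
    rw [hWdef, Matrix.conjTranspose_smul, Complex.star_def, ← Complex.exp_conj, hconjδ]
  have hWHW : Wᴴ * W = 1 := by
    rw [hWct, hWdef, Matrix.smul_mul, Matrix.mul_smul, smul_smul, hV, ← Complex.exp_add]
    have h0 : δ + -δ = 0 := by ring
    rw [h0, Complex.exp_zero, one_smul]
  have hWWH : W * Wᴴ = 1 := mul_eq_one_comm.mp hWHW
  have hWt : Wᵀ = Wᴴ := by
    calc Wᵀ = Wᵀ * (W * Wᴴ) := by rw [hWWH, Matrix.mul_one]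
      _ = (Wᵀ * W) * Wᴴ := by rw [Matrix.mul_assoc]
      _ = Wᴴ := by rw [hWtW, Matrix.one_mul]
  have hWreal : W.map (starRingEnd ℂ) = W := by
    have h := congrArg Matrix.transpose hWt
    rw [Matrix.transpose_transpose, ct_t] at h
    exact h.symm
  have hVW : V = Complex.exp δ • W := by
    rw [hWdef, smul_smul, ← Complex.exp_add]
    have h0 : δ + -δ = 0 := by ring
    rw [h0, Complex.exp_zero, one_smul]
  exact ⟨(r i0).arg, W, hWtW, hWreal, hVW⟩
end

section
/- Let d be even, |+̂⟩ = (1/√2)(|0⟩ + i|1⟩) ∈ ℂᵈ (the d-dimensional maximally imaginary state), and define the real Kraus operators K_m = |1⟩⟨2m| + |0⟩⟨2m+1| mapping ℂᵈ to ℂ². Then the real CPTP map Λ(ρ) = Σ_m K_m ρ K_m† applied to ρ = |+̂⟩⟨+̂| yields Λ(|+̂⟩⟨+̂|) = |−i⟩⟨−i| where |−i⟩ = (1/√2)(|0⟩ − i|1⟩); in particular the output is a pure maximally imaginary single-qubit state with fidelity 1 to a Y-eigenstate. -/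
open Matrix

lemma aux_sandwich {n : Type*} [Fintype n] (A B : Matrix (Fin 2) n ℂ) (u : n → ℂ) :
    A * vecMulVec u (star u) * Bᴴ = vecMulVec (A *ᵥ u) (star (B *ᵥ u)) := by
  ext i j
  simp only [Matrix.mul_apply, vecMulVec_apply, mulVec, dotProduct,
    conjTranspose_apply, Pi.star_apply, star_sum, star_mul', Finset.sum_mul,
    Finset.mul_sum]
  refine Finset.sum_congr rfl fun b _ => Finset.sum_congr rfl fun a _ => ?_
  ring

theorem kraus_map_of_maximally_imaginary (k : ℕ) (hk : 0 < k) :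
    letI K : Fin k → Matrix (Fin 2) (Fin (2 * k)) ℂ := fun m =>
      Matrix.of fun i j =>
        if ((i : ℕ) = 1 ∧ (j : ℕ) = 2 * (m : ℕ)) ∨
            ((i : ℕ) = 0 ∧ (j : ℕ) = 2 * (m : ℕ) + 1) then 1 else 0
    letI plus : Fin (2 * k) → ℂ := fun j =>
      if (j : ℕ) = 0 then 1 / Real.sqrt 2
      else if (j : ℕ) = 1 then Complex.I / Real.sqrt 2 else 0
    ∑ m, K m * vecMulVec plus (star plus) * (K m)ᴴ =
      !![1/2, Complex.I/2; -Complex.I/2, 1/2] := by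
  set K : Fin k → Matrix (Fin 2) (Fin (2 * k)) ℂ := fun m =>
      Matrix.of fun i j =>
        if ((i : ℕ) = 1 ∧ (j : ℕ) = 2 * (m : ℕ)) ∨
            ((i : ℕ) = 0 ∧ (j : ℕ) = 2 * (m : ℕ) + 1) then 1 else 0 with hK
  set plus : Fin (2 * k) → ℂ := fun j =>
      if (j : ℕ) = 0 then 1 / Real.sqrt 2
      else if (j : ℕ) = 1 then Complex.I / Real.sqrt 2 else 0 with hplus
  have hKp : ∀ m : Fin k, K m *ᵥ plus =
      if (m : ℕ) = 0 then ![Complex.I / Real.sqrt 2, 1 / Real.sqrt 2] else 0 := by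
    intro m
    have hm2 : 2 * (m : ℕ) + 1 < 2 * k := by omega
    have hm1 : 2 * (m : ℕ) < 2 * k := by omega
    have e0 : (K m *ᵥ plus) 0 = if (m : ℕ) = 0 then Complex.I / Real.sqrt 2 else 0 := by
      rw [mulVec, dotProduct]
      have h : ∀ a : Fin (2 * k), K m 0 a * plus a =
          if a = (⟨2 * (m : ℕ) + 1, hm2⟩ : Fin (2 * k)) then plus a else 0 := by
        intro a
        simp only [hK, Matrix.of_apply, Fin.ext_iff]
        norm_num
      simp only [h, Finset.sum_ite_eq' Finset.univ, Finset.mem_univ, if_true]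
      by_cases hm : (m : ℕ) = 0 <;> simp [hplus, hm]
    have e1 : (K m *ᵥ plus) 1 = if (m : ℕ) = 0 then (1 : ℂ) / Real.sqrt 2 else 0 := by
      rw [mulVec, dotProduct]
      have h : ∀ a : Fin (2 * k), K m 1 a * plus a =
          if a = (⟨2 * (m : ℕ), hm1⟩ : Fin (2 * k)) then plus a else 0 := by
        intro a
        simp only [hK, Matrix.of_apply, Fin.ext_iff]
        norm_num
      simp only [h, Finset.sum_ite_eq' Finset.univ, Finset.mem_univ, if_true]
      by_cases hm : (m : ℕ) = 0 <;> simp [hplus, hm]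
    ext i
    fin_cases i
    · by_cases hm : (m : ℕ) = 0 <;> simp [hm] <;> simpa [hm] using e0
    · by_cases hm : (m : ℕ) = 0 <;> simp [hm] <;> simpa [hm] using e1
  simp only [aux_sandwich, hKp]
  rw [Finset.sum_eq_single_of_mem (⟨0, hk⟩ : Fin k) (Finset.mem_univ _)]
  · simp only [if_pos rfl]
    ext i j
    have h2 : (Real.sqrt 2 : ℂ) * (Real.sqrt 2 : ℂ) = 2 := by
      rw [← Complex.ofReal_mul, Real.mul_self_sqrt (by norm_num)]; norm_num
    fin_cases i <;> fin_cases j <;>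
      simp [vecMulVec_apply, Matrix.cons_val_zero, Matrix.cons_val_one, div_mul_div_comm,
        Complex.I_mul_I, h2] <;>
      field_simp <;> ring_nf <;>
      simp [Complex.ext_iff, Complex.sq_norm] <;> rw [sq, h2] <;> norm_num
  · intro m _ hm
    have : ¬ ((m : ℕ) = 0) := by
      simpa [Fin.ext_iff] using hm
    simp [this, vecMulVec_apply]
end
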